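/- Assume the abc conjecture. Then for every ε > 0 there exists K(ε) > 0 such that for all j ≥ 2 and every positive integer n < 2^j whose Collatz iterates n, T(n), …, T^{j−1}(n) contain exactly one even term, n ≥ K(ε)·2^{(1−ε)j}. -/

import Mathlib

/-- The radical of a positive integer: the product of its distinct prime factors. -/
def rad (n : ℕ) : ℕ := n.primeFactors.prod id

/-- The shortcut Collatz map. -/
def T (n : ℕ) : ℕ := if n % 2 = 1 then (3 * n + 1) / 2 else n / 2

/-- The abc conjecture: for every ε > 0 there are only finitely many coprime triples
(a,b,c) with a + b = c and c > rad(abc)^(1+ε). -/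
def AbcConjecture : Prop :=
  ∀ ε : ℝ, 0 < ε →
    {t : ℕ × ℕ × ℕ | 0 < t.1 ∧ 0 < t.2.1 ∧ 0 < t.2.2 ∧ Nat.Coprime t.1 t.2.1 ∧
      t.1 + t.2.1 = t.2.2 ∧
      ((rad (t.1 * t.2.1 * t.2.2) : ℝ)) ^ ((1 : ℝ) + ε) < (t.2.2 : ℝ)}.Finite

/-!
If `T^[k] n` is the only even iterate, the odd run before it gives
`2 ^ k * (T^[k] n + 1) = 3 ^ k * (n + 1)`, so `n + 1 = 2 ^ k * a` and `T^[k] n + 1 = 3 ^ k * a`;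
after the halving step, the odd run of length `j - k - 1` gives `3 ^ k * a + 1 = 2 ^ (j - k) * b`.
The abc conjecture applied to `1 + 3 ^ k * a = 2 ^ (j - k) * b`, whose radical is at most `6ab`,
together with `b ≤ 4 ^ k * a`, yields `2 ^ j ≤ D * (n + 1) ^ (1 + ε)`; finally
`1 / (1 + ε) ≥ 1 - ε`.
-/

lemma rad_pos (n : ℕ) : 0 < rad n :=
  Finset.prod_pos fun _ hp => (Nat.prime_of_mem_primeFactors hp).pos

lemma rad_le_of_primeFactors_subset {n m : ℕ} (hm : m ≠ 0)
    (h : n.primeFactors ⊆ m.primeFactors) : rad n ≤ m :=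
  Nat.le_of_dvd (Nat.pos_of_ne_zero hm) ((Nat.prod_primeFactors_dvd_iff hm).2 h)

lemma rad_pow_mul_mul_pow_mul_le {p q a b : ℕ} (k s : ℕ) (hp : p ≠ 0) (hq : q ≠ 0)
    (ha : a ≠ 0) (hb : b ≠ 0) : rad (p ^ k * a * (q ^ s * b)) ≤ p * a * (q * b) := by
  refine rad_le_of_primeFactors_subset (by positivity) fun r hr => ?_
  simp only [Nat.mem_primeFactors] at hr ⊢
  obtain ⟨hr, hdvd, -⟩ := hr
  have hpow {m c e : ℕ} (h : r ∣ m ^ e * c) : r ∣ m * c :=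
    (hr.dvd_mul.1 h).elim (fun h => dvd_mul_of_dvd_left (hr.dvd_of_dvd_pow h) _)
      (dvd_mul_of_dvd_right · _)
  refine ⟨hr, (hr.dvd_mul.1 hdvd).elim (fun h => ?_) (fun h => ?_), by positivity⟩
  · exact dvd_mul_of_dvd_left (hpow h) _
  · exact dvd_mul_of_dvd_right (hpow h) _

theorem AbcConjecture.exists_le_mul_rad_rpow (habc : AbcConjecture) {ε : ℝ} (hε : 0 < ε) :
    ∃ C : ℝ, 0 < C ∧ ∀ a b : ℕ, 0 < a → 0 < b → a.Coprime b →
      ((a + b : ℕ) : ℝ) ≤ C * (rad (a * b * (a + b)) : ℝ) ^ (1 + ε) := by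
  obtain ⟨C₀, hC₀⟩ := ((habc ε hε).image fun t => (t.2.2 : ℝ)).bddAbove
  refine ⟨max C₀ 1, by positivity, fun a b ha hb hab => ?_⟩
  have hrad : 1 ≤ (rad (a * b * (a + b)) : ℝ) ^ (1 + ε) :=
    Real.one_le_rpow (by exact_mod_cast rad_pos _) (by linarith)
  by_cases hexc : (rad (a * b * (a + b)) : ℝ) ^ (1 + ε) < ((a + b : ℕ) : ℝ)
  · calc ((a + b : ℕ) : ℝ) ≤ C₀ :=
          hC₀ ⟨(a, b, a + b), ⟨ha, hb, show 0 < a + b by omega, hab, rfl, hexc⟩, rfl⟩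
      _ ≤ max C₀ 1 := le_max_left _ _
      _ ≤ _ := le_mul_of_one_le_right (by positivity) hrad
  · exact (not_lt.1 hexc).trans (le_mul_of_one_le_left (by positivity) (le_max_right _ _))

lemma two_mul_T_of_odd {n : ℕ} (h : n % 2 = 1) : 2 * T n = 3 * n + 1 := by
  unfold T; rw [if_pos h]; omega

lemma two_mul_T_of_even {n : ℕ} (h : n % 2 = 0) : 2 * T n = n := by
  unfold T; rw [if_neg (by omega)]; omega

lemma two_pow_mul_iterate_T_add_one {n k : ℕ} (h : ∀ i < k, T^[i] n % 2 = 1) :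
    2 ^ k * (T^[k] n + 1) = 3 ^ k * (n + 1) := by
  induction k with
  | zero => simp
  | succ k ih =>
    rw [Function.iterate_succ_apply', pow_succ, pow_succ, mul_right_comm (3 ^ k),
      ← ih fun i hi => h i (by omega), mul_assoc, mul_add, two_mul_T_of_odd (h k k.lt_succ_self)]
    ring

lemma exists_add_one_eq_of_forall_odd {n k : ℕ} (h : ∀ i < k, T^[i] n % 2 = 1) :
    ∃ a, n + 1 = 2 ^ k * a ∧ T^[k] n + 1 = 3 ^ k * a := by
  have heq := two_pow_mul_iterate_T_add_one h
  obtain ⟨a, ha⟩ : 2 ^ k ∣ n + 1 :=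
    (Nat.Coprime.pow k k (by norm_num)).dvd_of_dvd_mul_left ⟨_, heq.symm⟩
  refine ⟨a, ha, Nat.eq_of_mul_eq_mul_left (by positivity : 0 < 2 ^ k) ?_⟩
  rw [heq, ha]
  ring

lemma exists_of_card_filter_even_eq_one {j n : ℕ}
    (h : ((Finset.range j).filter (fun i => T^[i] n % 2 = 0)).card = 1) :
    ∃ k a b, k < j ∧ n + 1 = 2 ^ k * a ∧ 3 ^ k * a + 1 = 2 ^ (j - k) * b := by
  obtain ⟨k, hfilter⟩ := Finset.card_eq_one.mp h
  have heven : ∀ i, i < j ∧ T^[i] n % 2 = 0 ↔ i = k := fun i => by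
    simpa using Finset.ext_iff.mp hfilter i
  obtain ⟨hkj, hk⟩ := (heven k).2 rfl
  have hodd : ∀ i < j, i ≠ k → T^[i] n % 2 = 1 := fun i hi hik => by
    by_contra hne
    exact hik ((heven i).1 ⟨hi, by omega⟩)
  obtain ⟨a, ha, hTa⟩ := exists_add_one_eq_of_forall_odd fun i (hi : i < k) =>
    hodd i (by omega) (by omega)
  obtain ⟨b, hb, -⟩ := exists_add_one_eq_of_forall_odd (n := T^[k + 1] n) (k := j - k - 1)
    fun i hi => by
      rw [← Function.iterate_add_apply]
      exact hodd _ (by omega) (by omega)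
  have hhalf : 2 * T^[k + 1] n = T^[k] n := by
    rw [Function.iterate_succ_apply', two_mul_T_of_even hk]
  refine ⟨k, a, b, hkj, ha, ?_⟩
  rw [show j - k = j - k - 1 + 1 by omega, pow_succ]
  linarith

lemma mul_le_mul_rpow_of_mul_le_mul_rpow {C ε u v a b : ℝ} (hC : 0 ≤ C) (hε : 0 ≤ ε)
    (hu : 0 < u) (ha : 0 < a) (hb : 0 < b) (hbu : b ≤ u ^ 2 * a)
    (h : v * b ≤ C * (a * b) ^ (1 + ε)) : u * v ≤ C * (u * a) ^ (1 + 2 * ε) := by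
  have hbu' : b / u ≤ u * a := by
    rw [div_le_iff₀ hu]
    linarith
  have huε : u ^ ε ≠ 0 := (Real.rpow_pos_of_pos hu ε).ne'
  calc u * v = u * (v * b) / b := by field_simp
    _ ≤ u * (C * (a * b) ^ (1 + ε)) / b := by gcongr
    _ = C * (u * a) ^ (1 + ε) * (b / u) ^ ε := by
      rw [Real.mul_rpow ha.le hb.le, Real.mul_rpow hu.le ha.le, Real.div_rpow hb.le hu.le,
        Real.rpow_add hb, Real.rpow_add hu, Real.rpow_one, Real.rpow_one]
      field_simp
    _ ≤ C * (u * a) ^ (1 + ε) * (u * a) ^ ε := by gcongr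
    _ = C * (u * a) ^ (1 + 2 * ε) := by
      rw [mul_assoc, ← Real.rpow_add (by positivity)]
      ring_nf

lemma rpow_le_rpow_inv_mul_of_le_mul_rpow {x D N q t : ℝ} (hx : 1 ≤ x) (hD : 0 ≤ D)
    (hN : 0 ≤ N) (hq : 0 < q) (ht : t * q ≤ 1) (h : x ≤ D * N ^ q) :
    x ^ t ≤ D ^ q⁻¹ * N :=
  calc x ^ t ≤ x ^ q⁻¹ :=
        Real.rpow_le_rpow_of_exponent_le hx (by rw [← one_div, le_div_iff₀ hq]; exact ht)
    _ ≤ (D * N ^ q) ^ q⁻¹ := Real.rpow_le_rpow (by linarith) h (inv_nonneg.2 hq.le)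
    _ = D ^ q⁻¹ * N := by
      rw [Real.mul_rpow hD (Real.rpow_nonneg hN _), ← Real.rpow_mul hN, mul_inv_cancel₀ hq.ne',
        Real.rpow_one]

theorem AbcConjecture.exists_two_pow_le_mul_rpow (habc : AbcConjecture) {ε : ℝ} (hε : 0 < ε) :
    ∃ D : ℝ, 0 < D ∧ ∀ k s a b : ℕ, 0 < s → 0 < a → 3 ^ k * a + 1 = 2 ^ s * b →
      (2 : ℝ) ^ (k + s) ≤ D * ((2 : ℝ) ^ k * a) ^ (1 + 2 * ε) := by
  obtain ⟨C, hC, hbound⟩ := habc.exists_le_mul_rad_rpow hε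
  refine ⟨C * 6 ^ (1 + ε), by positivity, fun k s a b hs ha hab => ?_⟩
  have hb : 0 < b := Nat.pos_of_ne_zero fun hb => by simp [hb] at hab
  have hba : b ≤ (2 ^ k) ^ 2 * a := by
    have h2s : 2 ≤ 2 ^ s := Nat.le_self_pow hs.ne' 2
    have h34 : 3 ^ k ≤ (2 ^ k) ^ 2 := by
      rw [← pow_mul, mul_comm, pow_mul]
      exact Nat.pow_le_pow_left (by norm_num) k
    nlinarith
  have habc' := hbound 1 (3 ^ k * a) one_pos (by positivity) (Nat.coprime_one_left _)
  rw [add_comm 1, hab] at habc'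
  have hrad : (rad (1 * (3 ^ k * a) * (2 ^ s * b)) : ℝ) ≤ 3 * a * (2 * b) := by
    rw [one_mul]
    exact_mod_cast rad_pow_mul_mul_pow_mul_le k s three_ne_zero two_ne_zero ha.ne' hb.ne'
  rw [pow_add]
  refine mul_le_mul_rpow_of_mul_le_mul_rpow (u := 2 ^ k) (v := 2 ^ s) (a := a) (b := b)
    (by positivity) hε.le (by positivity)
    (by exact_mod_cast ha) (by exact_mod_cast hb) (by exact_mod_cast hba) ?_
  calc (2 : ℝ) ^ s * b = ((2 ^ s * b : ℕ) : ℝ) := by push_cast; ring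
    _ ≤ C * (3 * a * (2 * b)) ^ (1 + ε) := habc'.trans (by gcongr)
    _ = C * 6 ^ (1 + ε) * (a * b) ^ (1 + ε) := by
      rw [show (3 : ℝ) * a * (2 * b) = 6 * (a * b) by ring,
        Real.mul_rpow (by norm_num) (by positivity)]
      ring

theorem stmt_13 (habc : AbcConjecture) :
    ∀ ε : ℝ, 0 < ε → ∃ K : ℝ, 0 < K ∧
      ∀ j n : ℕ, 2 ≤ j → 0 < n → n < 2 ^ j →
        ((Finset.range j).filter (fun i => (T^[i] n) % 2 = 0)).card = 1 →
        K * (2 : ℝ) ^ ((1 - ε) * (j : ℝ)) ≤ (n : ℝ) := by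
  intro ε hε
  obtain ⟨D, hD, hbound⟩ := habc.exists_two_pow_le_mul_rpow (half_pos hε)
  refine ⟨(2 * D ^ (1 + ε)⁻¹)⁻¹, by positivity, fun j n _ hn _ hcard => ?_⟩
  obtain ⟨k, a, b, hkj, hna, hab⟩ := exists_of_card_filter_even_eq_one hcard
  have hpow : (2 : ℝ) ^ (j : ℝ) ≤ D * ((n : ℝ) + 1) ^ (1 + ε) := by
    have hN : (2 : ℝ) ^ k * a = n + 1 := by exact_mod_cast hna.symm
    have h := hbound k (j - k) a b (by omega) (Nat.pos_of_ne_zero (by rintro rfl; simp at hna)) hab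
    rwa [Nat.add_sub_cancel' hkj.le, mul_div_cancel₀ _ two_ne_zero, hN,
      ← Real.rpow_natCast] at h
  have hpow' := rpow_le_rpow_inv_mul_of_le_mul_rpow (t := 1 - ε)
    (Real.one_le_rpow one_le_two (Nat.cast_nonneg j)) hD.le (by positivity) (by positivity)
    (by nlinarith) hpow
  rw [← Real.rpow_mul zero_le_two, mul_comm] at hpow'
  have hn' : (1 : ℝ) ≤ n := by exact_mod_cast hn
  have hE : 0 < D ^ (1 + ε)⁻¹ := by positivity
  calc (2 * D ^ (1 + ε)⁻¹)⁻¹ * 2 ^ ((1 - ε) * (j : ℝ))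
      ≤ (2 * D ^ (1 + ε)⁻¹)⁻¹ * (D ^ (1 + ε)⁻¹ * (n + 1)) := by gcongr
    _ = (n + 1) / 2 := by field_simp
    _ ≤ n := by linarith
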